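/- Let Θ₀ : ℝ → [0,1] be a fixed smooth even function with Θ₀(x) = 1 for |x| ≤ 1 and Θ₀(x) = 0 for |x| ≥ 2. For δ ∈ (0,1), λ > 0 and s ≥ 1, set θ(y) = Θ₀(λy/δ). Then for every R ∈ 𝒴 and every integer j ≥ 1 there exists a constant C (depending only on R, j and Θ₀, not on δ, λ, s) such that whenever 0 < λ ≤ min(δ, 3δ/(4√s)): ‖θ R‖_{L²(ℝ)} ≤ C, and ‖(d^j θ/dy^j) · R‖_{L²(ℝ)} ≤ C e^{−√s}. -/

import Mathlib

/-!
Since `|θ| ≤ 1`, the first estimate only uses the bound `R(y)² ≤ C (1 + y²)^q e^{-2|y|}`.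
For `j ≥ 1`, `θ^{(j)}(y) = (λ/δ)^j Θ₀^{(j)}(λy/δ)` is bounded uniformly in `λ ≤ δ` and vanishes
for `|y| < δ/λ`, where `Θ₀` is locally constant. As `δ/λ ≥ 4√s/3`, on the support of `θ^{(j)}`
we have `e^{-2|y|} ≤ e^{-2√s} e^{-|y|/2}`, and `(1 + y²)^q e^{-|y|/2}` is still integrable.
-/

open scoped ContDiff

/-- The class `𝒴` of smooth even real functions decaying, together with all their derivatives,
like a polynomial times `e^{-|x|}`. -/
def memY (g : ℝ → ℝ) : Prop :=
  ContDiff ℝ ∞ g ∧ (∀ x, g (-x) = g x) ∧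
    ∃ q : ℕ, ∀ p : ℕ, ∃ C : ℝ, 0 < C ∧ ∀ x : ℝ,
      |iteratedDeriv p g x| ≤ C * (1 + x ^ 2) ^ ((q : ℝ) / 2) * Real.exp (-|x|)

/-- The rescaled cut-off `θ(y) = Θ₀(λy/δ)`. -/
noncomputable def cutTheta (Θ₀ : ℝ → ℝ) (δ lam : ℝ) (y : ℝ) : ℝ := Θ₀ (lam * y / δ)

open MeasureTheory Real Set Filter Asymptotics Topology

noncomputable def polyExpWeight (q : ℕ) (c y : ℝ) : ℝ := (1 + y ^ 2) ^ q * exp (-(c * |y|))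

lemma polyExpWeight_nonneg (q : ℕ) (c y : ℝ) : 0 ≤ polyExpWeight q c y := by
  unfold polyExpWeight; positivity

lemma integrable_polyExpWeight (q : ℕ) {c : ℝ} (hc : 0 < c) : Integrable (polyExpWeight q c) := by
  have hcont : Continuous (polyExpWeight q c) := by unfold polyExpWeight; fun_prop
  have hpoly : (fun y : ℝ => (1 + y ^ 2) ^ q) =O[atTop] fun y => y ^ (2 * q) := by
    refine IsBigO.of_bound (2 ^ q) ?_
    filter_upwards [eventually_ge_atTop 1] with y hy
    rw [norm_of_nonneg (by positivity), norm_of_nonneg (by positivity), pow_mul, ← mul_pow]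
    gcongr
    nlinarith
  have hdecay := ((hpoly.trans_isLittleO (isLittleO_pow_exp_pos_mul_atTop (2 * q)
    (half_pos hc))).isBigO.mul (isBigO_refl (fun y => exp (-(c * y))) atTop))
  refine hcont.locallyIntegrable.integrable_of_isBigO_atTop_of_norm_isNegInvariant
    (g := fun y => exp (-(c / 2) * y)) (Eventually.of_forall fun y => by simp [polyExpWeight])
    (hdecay.congr' ?_ ?_) ⟨Ioi 0, Ioi_mem_atTop 0, exp_neg_integrableOn_Ioi 0 (half_pos hc)⟩
  · filter_upwards [eventually_ge_atTop 0] with y hy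
    rw [polyExpWeight, abs_of_nonneg hy]
  · exact Eventually.of_forall fun y => by dsimp only; rw [← exp_add]; ring_nf

lemma polyExpWeight_two_le {q : ℕ} {t y : ℝ} (hy : 4 / 3 * t ≤ |y|) :
    polyExpWeight q 2 y ≤ exp (-t) ^ 2 * polyExpWeight q 2⁻¹ y := by
  rw [polyExpWeight, polyExpWeight, mul_left_comm, ← exp_nat_mul, ← exp_add]
  gcongr
  push_cast
  linarith

theorem memY.exists_sq_le_polyExpWeight {R : ℝ → ℝ} (hR : memY R) :
    ∃ (q : ℕ) (C : ℝ), 0 < C ∧ ∀ y, R y ^ 2 ≤ C * polyExpWeight q 2 y := by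
  obtain ⟨-, -, q, hq⟩ := hR
  obtain ⟨C, hC, hCR⟩ := hq 0
  refine ⟨q, C ^ 2, by positivity, fun y => ?_⟩
  have hpow : ((1 + y ^ 2) ^ ((q : ℝ) / 2)) ^ 2 = (1 + y ^ 2) ^ q := by
    rw [← rpow_natCast _ 2, ← rpow_mul (by positivity)]
    norm_num
  calc R y ^ 2 ≤ (C * (1 + y ^ 2) ^ ((q : ℝ) / 2) * exp (-|y|)) ^ 2 := by
        simpa using sq_le_sq' (abs_le.mp (hCR y)).1 (abs_le.mp (hCR y)).2
    _ = C ^ 2 * polyExpWeight q 2 y := by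
        rw [polyExpWeight, mul_pow, mul_pow, hpow, ← exp_nat_mul]
        push_cast
        ring_nf

lemma sqrt_integral_sq_le {f G : ℝ → ℝ} {a : ℝ} (ha : 0 ≤ a) (hG : Integrable G)
    (h : ∀ y, f y ^ 2 ≤ a ^ 2 * G y) : √(∫ y, f y ^ 2) ≤ a * √(∫ y, G y) := by
  have hmono : ∫ y, f y ^ 2 ≤ a ^ 2 * ∫ y, G y := by
    rw [← integral_const_mul]
    exact integral_mono_of_nonneg (.of_forall fun y => sq_nonneg _) (hG.const_mul _) (.of_forall h)
  calc √(∫ y, f y ^ 2) ≤ √(a ^ 2 * ∫ y, G y) := sqrt_le_sqrt hmono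
    _ = a * √(∫ y, G y) := by rw [sqrt_mul (sq_nonneg a), sqrt_sq ha]

lemma HasCompactSupport.iteratedDeriv {f : ℝ → ℝ} (hf : HasCompactSupport f) (n : ℕ) :
    HasCompactSupport (iteratedDeriv n f) :=
  (hf.iteratedFDeriv n).comp_left
    (g := fun L : ContinuousMultilinearMap ℝ (fun _ : Fin n => ℝ) ℝ => L fun _ => 1) rfl

lemma HasCompactSupport.of_eq_zero_of_le_abs {f : ℝ → ℝ} {r : ℝ} (h : ∀ x, r ≤ |x| → f x = 0) :
    HasCompactSupport f := by
  refine .intro (isCompact_closedBall 0 r) fun x hx => h x ?_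
  rw [Metric.mem_closedBall, dist_zero_right, Real.norm_eq_abs, not_le] at hx
  exact hx.le

lemma iteratedDeriv_eq_zero_of_eventuallyEq_const {f : ℝ → ℝ} {x c : ℝ} {n : ℕ} (hn : n ≠ 0)
    (h : f =ᶠ[𝓝 x] fun _ => c) : iteratedDeriv n f x = 0 := by
  rw [h.iteratedDeriv_eq, iteratedDeriv_const, if_neg hn]

section cutTheta

variable {Θ₀ : ℝ → ℝ} {δ lam : ℝ}

lemma iteratedDeriv_cutTheta {n : ℕ} (hsm : ContDiff ℝ n Θ₀) :
    iteratedDeriv n (cutTheta Θ₀ δ lam) =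
      fun y => (lam / δ) ^ n * iteratedDeriv n Θ₀ (lam / δ * y) := by
  rw [← iteratedDeriv_comp_const_mul hsm]
  congr with y
  rw [cutTheta]
  ring_nf

lemma iteratedDeriv_cutTheta_eq_zero {n : ℕ} (hn : n ≠ 0) (hsm : ContDiff ℝ n Θ₀)
    (hone : ∀ x : ℝ, |x| ≤ 1 → Θ₀ x = 1) (hδ : 0 < δ) (hlam : 0 < lam) {y : ℝ}
    (hy : |y| < δ / lam) :
    iteratedDeriv n (cutTheta Θ₀ δ lam) y = 0 := by
  have hlt : |lam / δ * y| < 1 := by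
    rw [abs_mul, abs_of_pos (div_pos hlam hδ), ← lt_div_iff₀' (div_pos hlam hδ), one_div_div]
    exact hy
  have hconst : Θ₀ =ᶠ[𝓝 (lam / δ * y)] fun _ => 1 := by
    filter_upwards [(isOpen_lt continuous_abs continuous_const).mem_nhds hlt] with x hx
    exact hone x hx.le
  simp only [iteratedDeriv_cutTheta hsm, iteratedDeriv_eq_zero_of_eventuallyEq_const hn hconst,
    mul_zero]

lemma abs_iteratedDeriv_cutTheta_le {n : ℕ} {K : ℝ} (hsm : ContDiff ℝ n Θ₀)
    (hK : ∀ x, ‖iteratedDeriv n Θ₀ x‖ ≤ K) (hδ : 0 < δ) (hlam : 0 < lam) (hlamδ : lam ≤ δ)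
    (y : ℝ) :
    |iteratedDeriv n (cutTheta Θ₀ δ lam) y| ≤ K := by
  have hr : 0 ≤ lam / δ ∧ lam / δ ≤ 1 := ⟨by positivity, (div_le_one hδ).mpr hlamδ⟩
  rw [iteratedDeriv_cutTheta hsm, abs_mul, abs_of_nonneg (pow_nonneg hr.1 n)]
  calc (lam / δ) ^ n * |iteratedDeriv n Θ₀ (lam / δ * y)| ≤ 1 * K :=
        mul_le_mul (pow_le_one₀ hr.1 hr.2) (hK _) (abs_nonneg _) zero_le_one
    _ = K := one_mul K

end cutTheta

lemma sq_mul_le_of_eq_zero_of_abs_lt {θ R : ℝ → ℝ} {q : ℕ} {K C ρ t : ℝ} (hC : 0 ≤ C)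
    (hθ0 : ∀ y, |y| < ρ → θ y = 0) (hθK : ∀ y, |θ y| ≤ K)
    (hR : ∀ y, R y ^ 2 ≤ C * polyExpWeight q 2 y) (hρ : 4 / 3 * t ≤ ρ) (y : ℝ) :
    (θ y * R y) ^ 2 ≤ exp (-t) ^ 2 * (K ^ 2 * C * polyExpWeight q 2⁻¹ y) := by
  rcases lt_or_ge |y| ρ with hy | hy
  · rw [hθ0 y hy, zero_mul, zero_pow two_ne_zero]
    have := polyExpWeight_nonneg q 2⁻¹ y
    positivity
  · calc (θ y * R y) ^ 2 = θ y ^ 2 * R y ^ 2 := mul_pow _ _ _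
      _ ≤ K ^ 2 * (C * polyExpWeight q 2 y) :=
        mul_le_mul (sq_le_sq' (abs_le.mp (hθK y)).1 (abs_le.mp (hθK y)).2) (hR y) (sq_nonneg _)
          (sq_nonneg _)
      _ ≤ K ^ 2 * (C * (exp (-t) ^ 2 * polyExpWeight q 2⁻¹ y)) := by
        gcongr
        exact polyExpWeight_two_le (hρ.trans hy)
      _ = exp (-t) ^ 2 * (K ^ 2 * C * polyExpWeight q 2⁻¹ y) := by ring

theorem cutoff_estimates_Y_general (Θ₀ : ℝ → ℝ) (hsm : ContDiff ℝ ∞ Θ₀)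
    (hrange : ∀ x, Θ₀ x ∈ Set.Icc (0 : ℝ) 1)
    (hone : ∀ x : ℝ, |x| ≤ 1 → Θ₀ x = 1) (hzero : ∀ x : ℝ, 2 ≤ |x| → Θ₀ x = 0)
    (R : ℝ → ℝ) (hR : memY R) (j : ℕ) (hj : 1 ≤ j) :
    ∃ C : ℝ, 0 < C ∧ ∀ δ lam s : ℝ, δ ∈ Set.Ioo (0 : ℝ) 1 → 0 < lam → 1 ≤ s →
      lam ≤ min δ (3 * δ / (4 * Real.sqrt s)) →
      Real.sqrt (∫ y : ℝ, (cutTheta Θ₀ δ lam y * R y) ^ 2) ≤ C ∧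
      Real.sqrt (∫ y : ℝ, (iteratedDeriv j (cutTheta Θ₀ δ lam) y * R y) ^ 2)
        ≤ C * Real.exp (-Real.sqrt s) := by
  obtain ⟨q, C₀, hC₀, hR2⟩ := hR.exists_sq_le_polyExpWeight
  have hsmj : ContDiff ℝ j Θ₀ := hsm.of_le (by exact_mod_cast le_top)
  obtain ⟨K, hK⟩ := ((HasCompactSupport.of_eq_zero_of_le_abs hzero).iteratedDeriv j)
    |>.exists_bound_of_continuous (hsmj.continuous_iteratedDeriv' j)
  set I₁ := √(∫ y, C₀ * polyExpWeight q 2 y)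
  set I₂ := √(∫ y, K ^ 2 * C₀ * polyExpWeight q 2⁻¹ y)
  have hI : 0 ≤ I₁ ∧ 0 ≤ I₂ := ⟨sqrt_nonneg _, sqrt_nonneg _⟩
  refine ⟨1 + I₁ + I₂, by positivity, fun δ lam s hδ hlam hs hmin => ⟨?_, ?_⟩⟩
  · have hθ : ∀ y, cutTheta Θ₀ δ lam y ^ 2 ≤ 1 := fun y =>
      pow_le_one₀ (hrange (lam * y / δ)).1 (hrange (lam * y / δ)).2
    calc √(∫ y, (cutTheta Θ₀ δ lam y * R y) ^ 2) ≤ 1 * I₁ :=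
          sqrt_integral_sq_le zero_le_one ((integrable_polyExpWeight q two_pos).const_mul _)
            fun y => by
              rw [one_pow, one_mul, mul_pow]
              exact (mul_le_of_le_one_left (sq_nonneg _) (hθ y)).trans (hR2 y)
      _ ≤ 1 + I₁ + I₂ := by linarith
  · have hρ : 4 / 3 * √s ≤ δ / lam := by
      have := (le_div_iff₀ (by positivity)).mp (hmin.trans (min_le_right _ _))
      rw [le_div_iff₀ hlam]
      linarith
    calc √(∫ y, (iteratedDeriv j (cutTheta Θ₀ δ lam) y * R y) ^ 2) ≤ exp (-√s) * I₂ :=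
          sqrt_integral_sq_le (exp_pos _).le
            ((integrable_polyExpWeight q (by norm_num)).const_mul _)
            (sq_mul_le_of_eq_zero_of_abs_lt hC₀.le
              (fun y => iteratedDeriv_cutTheta_eq_zero (by omega) hsmj hone hδ.1 hlam)
              (abs_iteratedDeriv_cutTheta_le hsmj hK hδ.1 hlam (hmin.trans (min_le_left _ _)))
              hR2 hρ)
      _ ≤ (1 + I₁ + I₂) * exp (-√s) := by
          rw [mul_comm]
          gcongr
          linarith

/-- Cut-off estimates against `𝒴`: for `R ∈ 𝒴` and `j ≥ 1` there is `C` (independent of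
`δ, λ, s`) such that, whenever `0 < λ ≤ min(δ, 3δ/(4√s))`,
`‖θR‖_{L²} ≤ C` and `‖θ^{(j)}R‖_{L²} ≤ C e^{−√s}`, where `θ(y) = Θ₀(λy/δ)`. -/
theorem cutoff_estimates_Y (Θ₀ : ℝ → ℝ) (hsm : ContDiff ℝ ∞ Θ₀)
    (heven : ∀ x, Θ₀ (-x) = Θ₀ x) (hrange : ∀ x, Θ₀ x ∈ Set.Icc (0 : ℝ) 1)
    (hone : ∀ x : ℝ, |x| ≤ 1 → Θ₀ x = 1) (hzero : ∀ x : ℝ, 2 ≤ |x| → Θ₀ x = 0)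
    (R : ℝ → ℝ) (hR : memY R) (j : ℕ) (hj : 1 ≤ j) :
    ∃ C : ℝ, 0 < C ∧ ∀ δ lam s : ℝ, δ ∈ Set.Ioo (0 : ℝ) 1 → 0 < lam → 1 ≤ s →
      lam ≤ min δ (3 * δ / (4 * Real.sqrt s)) →
      Real.sqrt (∫ y : ℝ, (cutTheta Θ₀ δ lam y * R y) ^ 2) ≤ C ∧
      Real.sqrt (∫ y : ℝ, (iteratedDeriv j (cutTheta Θ₀ δ lam) y * R y) ^ 2)
        ≤ C * Real.exp (-Real.sqrt s) :=
  cutoff_estimates_Y_general Θ₀ hsm hrange hone hzero R hR j hj
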